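/- Let (A, m_A, i_A) and (B, m_B, i_B) be Q-systems in Hilb, let (H, Q1, Q2) be a quantum bi-element of the pair (A, B), and set P := Q1∘Q2* : H ⊗ B → A ⊗ H. Then P satisfies the comultiplicativity axiom of a quantum function from B to A: (m_A* ⊗ 1_H)∘P = (1_A ⊗ P)∘(P ⊗ 1_B)∘(1_H ⊗ m_B*) as linear maps H ⊗ B → A ⊗ A ⊗ H. -/

import Mathlib

/-!
Q-systems in the C*-tensor category `Hilb` of finite dimensional complex Hilbert
spaces.  Tensor products of Hilbert spaces carry the natural inner product
`⟪a ⊗ b, c ⊗ d⟫ = ⟪a, c⟫ * ⟪b, d⟫`; since Mathlib does not provide this inner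
product structure on `TensorProduct`, we encode it by a pairing
`p : E ⊗ F → E ⊗ F → ℂ` together with the (uniquely determining) requirements
that it is sesquilinear and takes the natural values on elementary tensors
(`IsTensorPairing`).  Hilbert space adjoints are encoded as data together with
their (uniquely determining) defining property w.r.t. these pairings
(`AdjointWRT`).  Identifications along the canonical associator and unitor
isomorphisms are written explicitly via `TensorProduct.assoc`, `lid`, `rid`.
-/

open scoped TensorProduct
open LinearMap

noncomputable section

/-- The natural inner product pairing on the tensor product of two complex
inner product spaces: sesquilinear (conjugate-linear in the first variable,
linear in the second) and `⟪a ⊗ b, c ⊗ d⟫ = ⟪a, c⟫ * ⟪b, d⟫` on elementary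
tensors.  These conditions determine the pairing uniquely. -/
def IsTensorPairing {E F : Type*} [NormedAddCommGroup E] [InnerProductSpace ℂ E]
    [NormedAddCommGroup F] [InnerProductSpace ℂ F]
    (p : E ⊗[ℂ] F → E ⊗[ℂ] F → ℂ) : Prop :=
  (∀ x x' y, p (x + x') y = p x y + p x' y) ∧
  (∀ x y y', p x (y + y') = p x y + p x y') ∧
  (∀ (c : ℂ) (x y), p (c • x) y = (starRingEnd ℂ) c * p x y) ∧
  (∀ (c : ℂ) (x y), p x (c • y) = c * p x y) ∧
  (∀ (a : E) (b : F) (c : E) (d : F),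
    p (a ⊗ₜ[ℂ] b) (c ⊗ₜ[ℂ] d) = (inner ℂ a c : ℂ) * (inner ℂ b d : ℂ))

/-- The inner product pairing of a complex inner product space. -/
def innerP (E : Type*) [NormedAddCommGroup E] [InnerProductSpace ℂ E] : E → E → ℂ :=
  fun x y => inner ℂ x y

/-- `g` is the (Hilbert space) adjoint of `f` with respect to the pairings
`pX` and `pY`:  `⟪f x, y⟫ = ⟪x, g y⟫` for all `x`, `y`. -/
def AdjointWRT {X Y : Type*} [AddCommMonoid X] [Module ℂ X] [AddCommMonoid Y] [Module ℂ Y]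
    (pX : X → X → ℂ) (pY : Y → Y → ℂ) (f : X →ₗ[ℂ] Y) (g : Y →ₗ[ℂ] X) : Prop :=
  ∀ x y, pY (f x) y = pX x (g y)

/-- The Q-system axioms for multiplication `m : A ⊗ A → A` and unit `i : ℂ → A`,
with `mS` playing the role of the adjoint `m*`:  associativity, unitality, the
Frobenius condition and separability (with canonical associators and unitors
written explicitly). -/
def QSystemEqs (A : Type*) [AddCommGroup A] [Module ℂ A]
    (m : A ⊗[ℂ] A →ₗ[ℂ] A) (i : ℂ →ₗ[ℂ] A) (mS : A →ₗ[ℂ] A ⊗[ℂ] A) : Prop :=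
  -- associativity: m ∘ (m ⊗ 1) = m ∘ (1 ⊗ m)
  m ∘ₗ rTensor A m =
      m ∘ₗ lTensor A m ∘ₗ (TensorProduct.assoc ℂ A A A).toLinearMap ∧
  -- unitality: m ∘ (i ⊗ 1) = 1 = m ∘ (1 ⊗ i)
  m ∘ₗ rTensor A i = (TensorProduct.lid ℂ A).toLinearMap ∧
  m ∘ₗ lTensor A i = (TensorProduct.rid ℂ A).toLinearMap ∧
  -- Frobenius: (m ⊗ 1) ∘ (1 ⊗ m*) = m* ∘ m = (1 ⊗ m) ∘ (m* ⊗ 1)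
  rTensor A m ∘ₗ (TensorProduct.assoc ℂ A A A).symm.toLinearMap ∘ₗ lTensor A mS =
      mS ∘ₗ m ∧
  lTensor A m ∘ₗ (TensorProduct.assoc ℂ A A A).toLinearMap ∘ₗ rTensor A mS =
      mS ∘ₗ m ∧
  -- separability: m ∘ m* = 1
  m ∘ₗ mS = LinearMap.id

/-- The defining conditions of a *quantum bi-element* `(H, Q1, Q2)` of a pair of
Q-systems `(A, mA, iA)`, `(B, mB, iB)` in Hilb, with `mAS, iAS, mBS, iBS, Q1S, Q2S`
playing the roles of the adjoints `mA*, iA*, mB*, iB*, Q1*, Q2*` (canonical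
associators and unitors written explicitly):
(1) `(1_A ⊗ Q1)∘Q1 = (mA* ⊗ 1_H)∘Q1`, `(Q2 ⊗ 1_B)∘Q2 = (1_H ⊗ mB*)∘Q2`,
    `(1_A ⊗ Q2)∘Q1 = (Q1 ⊗ 1_B)∘Q2`;
(2) `(iA* ⊗ 1_H)∘Q1 = 1_H = (1_H ⊗ iB*)∘Q2`;
(3) `Q1* = (iA* ⊗ 1_H)∘(mA ⊗ 1_H)∘(1_A ⊗ Q1)` and
    `Q2* = (1_H ⊗ iB*)∘(1_H ⊗ mB)∘(Q2 ⊗ 1_B)`. -/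
def QBEEqs (A B H : Type*) [AddCommGroup A] [Module ℂ A] [AddCommGroup B] [Module ℂ B]
    [AddCommGroup H] [Module ℂ H]
    (mA : A ⊗[ℂ] A →ₗ[ℂ] A) (iAS : A →ₗ[ℂ] ℂ) (mAS : A →ₗ[ℂ] A ⊗[ℂ] A)
    (mB : B ⊗[ℂ] B →ₗ[ℂ] B) (iBS : B →ₗ[ℂ] ℂ) (mBS : B →ₗ[ℂ] B ⊗[ℂ] B)
    (Q1 : H →ₗ[ℂ] A ⊗[ℂ] H) (Q2 : H →ₗ[ℂ] H ⊗[ℂ] B)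
    (Q1S : A ⊗[ℂ] H →ₗ[ℂ] H) (Q2S : H ⊗[ℂ] B →ₗ[ℂ] H) : Prop :=
  -- (1)
  lTensor A Q1 ∘ₗ Q1 =
      (TensorProduct.assoc ℂ A A H).toLinearMap ∘ₗ rTensor H mAS ∘ₗ Q1 ∧
  rTensor B Q2 ∘ₗ Q2 =
      (TensorProduct.assoc ℂ H B B).symm.toLinearMap ∘ₗ lTensor H mBS ∘ₗ Q2 ∧
  lTensor A Q2 ∘ₗ Q1 =
      (TensorProduct.assoc ℂ A H B).toLinearMap ∘ₗ rTensor B Q1 ∘ₗ Q2 ∧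
  -- (2)
  (TensorProduct.lid ℂ H).toLinearMap ∘ₗ rTensor H iAS ∘ₗ Q1 = LinearMap.id ∧
  (TensorProduct.rid ℂ H).toLinearMap ∘ₗ lTensor H iBS ∘ₗ Q2 = LinearMap.id ∧
  -- (3)
  Q1S = (TensorProduct.lid ℂ H).toLinearMap ∘ₗ rTensor H iAS ∘ₗ rTensor H mA ∘ₗ
      (TensorProduct.assoc ℂ A A H).symm.toLinearMap ∘ₗ lTensor A Q1 ∧
  Q2S = (TensorProduct.rid ℂ H).toLinearMap ∘ₗ lTensor H iBS ∘ₗ lTensor H mB ∘ₗ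
      (TensorProduct.assoc ℂ H B B).toLinearMap ∘ₗ rTensor B Q2

/-!
By formula (3), `Q2*` is the transpose of the coaction `Q2` against the Frobenius form
`iB* ∘ mB`. Coassociativity, counitality and separability then give `Q2* ∘ Q2 = 1`, and the
Frobenius identities, together with the counit laws for `mB*` (the adjoints of the unit laws),
give `(Q2* ⊗ 1) ∘ (1 ⊗ mB*) = Q2 ∘ Q2*`. Hence the right-hand side is
`(1 ⊗ Q1)(1 ⊗ Q2*)(Q1 ⊗ 1) Q2 Q2* = (1 ⊗ Q1)(1 ⊗ Q2*)(1 ⊗ Q2) Q1 Q2* = (1 ⊗ Q1) Q1 Q2*`,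
which is `(mA* ⊗ 1) Q1 Q2*` by coassociativity of `Q1`.
-/

section Coherence

variable {R X X' Y Z : Type*} [CommRing R] [AddCommGroup X] [Module R X] [AddCommGroup X']
  [Module R X'] [AddCommGroup Y] [Module R Y] [AddCommGroup Z] [Module R Z]

lemma rTensor_rTensor_comp_assoc_symm (f : X →ₗ[R] X') :
    rTensor Z (rTensor Y f) ∘ₗ (TensorProduct.assoc R X Y Z).symm.toLinearMap
      = (TensorProduct.assoc R X' Y Z).symm.toLinearMap ∘ₗ rTensor (Y ⊗[R] Z) f := by
  ext x y z; simp

lemma assoc_comp_rTensor_rTensor (f : X →ₗ[R] X') :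
    (TensorProduct.assoc R X' Y Z).toLinearMap ∘ₗ rTensor Z (rTensor Y f)
      = rTensor (Y ⊗[R] Z) f ∘ₗ (TensorProduct.assoc R X Y Z).toLinearMap := by
  ext x y z; simp

lemma rTensor_contract_comp_assoc_symm_comp_lTensor (ψ : Y ⊗[R] Y →ₗ[R] R)
    (g : Y →ₗ[R] Y ⊗[R] Y) :
    rTensor Y ((TensorProduct.rid R X).toLinearMap ∘ₗ lTensor X ψ ∘ₗ
        (TensorProduct.assoc R X Y Y).toLinearMap) ∘ₗ
      (TensorProduct.assoc R (X ⊗[R] Y) Y Y).symm.toLinearMap ∘ₗ lTensor (X ⊗[R] Y) g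
    = lTensor X ((TensorProduct.lid R Y).toLinearMap ∘ₗ rTensor Y ψ ∘ₗ
        (TensorProduct.assoc R Y Y Y).symm.toLinearMap ∘ₗ lTensor Y g) ∘ₗ
      (TensorProduct.assoc R X Y Y).toLinearMap := by
  refine TensorProduct.ext_threefold fun x c b => ?_
  simp only [comp_apply, LinearEquiv.coe_coe, lTensor_tmul, TensorProduct.assoc_tmul]
  induction g b using TensorProduct.induction_on with
  | zero => simp
  | tmul b₁ b₂ => simp [TensorProduct.smul_tmul']
  | add u v hu hv => simp only [TensorProduct.tmul_add, map_add, hu, hv]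

lemma contract_comp_assoc_comp_rTensor_assoc_symm_comp_lTensor (ψ : Y ⊗[R] Y →ₗ[R] R)
    (g : Y →ₗ[R] Y ⊗[R] Y) :
    (TensorProduct.rid R (X ⊗[R] Y)).toLinearMap ∘ₗ lTensor (X ⊗[R] Y) ψ ∘ₗ
      (TensorProduct.assoc R (X ⊗[R] Y) Y Y).toLinearMap ∘ₗ
      rTensor Y ((TensorProduct.assoc R X Y Y).symm.toLinearMap ∘ₗ lTensor X g)
    = lTensor X ((TensorProduct.rid R Y).toLinearMap ∘ₗ lTensor Y ψ ∘ₗ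
        (TensorProduct.assoc R Y Y Y).toLinearMap ∘ₗ rTensor Y g) ∘ₗ
      (TensorProduct.assoc R X Y Y).toLinearMap := by
  refine TensorProduct.ext_threefold fun x c b => ?_
  simp only [comp_apply, LinearEquiv.coe_coe, lTensor_tmul, rTensor_tmul,
    TensorProduct.assoc_tmul]
  induction g c using TensorProduct.induction_on with
  | zero => simp
  | tmul c₁ c₂ => simp [TensorProduct.smul_tmul']
  | add u v hu hv => simp only [TensorProduct.tmul_add, TensorProduct.add_tmul, map_add, hu, hv]

lemma comp_rid_comp_lTensor (f : X →ₗ[R] X') (ψ : Y →ₗ[R] R) :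
    f ∘ₗ (TensorProduct.rid R X).toLinearMap ∘ₗ lTensor X ψ
      = (TensorProduct.rid R X').toLinearMap ∘ₗ lTensor X' ψ ∘ₗ rTensor Y f :=
  TensorProduct.ext' fun x y => by simp

end Coherence

section Frobenius

variable {R B : Type*} [CommRing R] [AddCommGroup B] [Module R B]
  {m : B ⊗[R] B →ₗ[R] B} {δ : B →ₗ[R] B ⊗[R] B} {ε : B →ₗ[R] R}

lemma lid_comp_rTensor_comp_lTensor_eq_of_frobenius
    (hfrob : rTensor B m ∘ₗ (TensorProduct.assoc R B B B).symm.toLinearMap ∘ₗ lTensor B δ =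
      δ ∘ₗ m)
    (hcounit : (TensorProduct.lid R B).toLinearMap ∘ₗ rTensor B ε ∘ₗ δ = LinearMap.id) :
    (TensorProduct.lid R B).toLinearMap ∘ₗ rTensor B (ε ∘ₗ m) ∘ₗ
      (TensorProduct.assoc R B B B).symm.toLinearMap ∘ₗ lTensor B δ = m := by
  rw [rTensor_comp, comp_assoc, hfrob, ← comp_assoc, ← comp_assoc, comp_assoc δ, hcounit, id_comp]

lemma rid_comp_lTensor_comp_rTensor_eq_of_frobenius
    (hfrob : lTensor B m ∘ₗ (TensorProduct.assoc R B B B).toLinearMap ∘ₗ rTensor B δ = δ ∘ₗ m)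
    (hcounit : (TensorProduct.rid R B).toLinearMap ∘ₗ lTensor B ε ∘ₗ δ = LinearMap.id) :
    (TensorProduct.rid R B).toLinearMap ∘ₗ lTensor B (ε ∘ₗ m) ∘ₗ
      (TensorProduct.assoc R B B B).toLinearMap ∘ₗ rTensor B δ = m := by
  rw [lTensor_comp, comp_assoc, hfrob, ← comp_assoc, ← comp_assoc, comp_assoc δ, hcounit, id_comp]

end Frobenius

section Counit

lemma IsTensorPairing.apply_zero_right {E F : Type*} [NormedAddCommGroup E]
    [InnerProductSpace ℂ E] [NormedAddCommGroup F] [InnerProductSpace ℂ F]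
    {p : E ⊗[ℂ] F → E ⊗[ℂ] F → ℂ} (hp : IsTensorPairing p) (x : E ⊗[ℂ] F) : p x 0 = 0 := by
  simpa using hp.2.2.2.1 0 x 0

variable {B : Type*} [NormedAddCommGroup B] [InnerProductSpace ℂ B]
  {p : B ⊗[ℂ] B → B ⊗[ℂ] B → ℂ} {m : B ⊗[ℂ] B →ₗ[ℂ] B} {mS : B →ₗ[ℂ] B ⊗[ℂ] B}
  {i : ℂ →ₗ[ℂ] B} {iS : B →ₗ[ℂ] ℂ}

lemma inner_lid_rTensor_eq_of_adjoint (hp : IsTensorPairing p)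
    (hi : AdjointWRT (innerP ℂ) (innerP B) i iS) (y : B) (t : B ⊗[ℂ] B) :
    inner ℂ y (TensorProduct.lid ℂ B (rTensor B iS t)) = p (i 1 ⊗ₜ y) t := by
  induction t using TensorProduct.induction_on with
  | zero => simp [hp.apply_zero_right]
  | tmul b₁ b₂ =>
    have hb₁ : inner ℂ (i 1) b₁ = iS b₁ := by simpa [innerP] using hi 1 b₁
    simp [hp.2.2.2.2, hb₁]
  | add u v hu hv => simp only [map_add, inner_add_right, hp.2.1, hu, hv]

lemma inner_rid_lTensor_eq_of_adjoint (hp : IsTensorPairing p)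
    (hi : AdjointWRT (innerP ℂ) (innerP B) i iS) (y : B) (t : B ⊗[ℂ] B) :
    inner ℂ y (TensorProduct.rid ℂ B (lTensor B iS t)) = p (y ⊗ₜ i 1) t := by
  induction t using TensorProduct.induction_on with
  | zero => simp [hp.apply_zero_right]
  | tmul b₁ b₂ =>
    have hb₂ : inner ℂ (i 1) b₂ = iS b₂ := by simpa [innerP] using hi 1 b₂
    simp [hp.2.2.2.2, hb₂, mul_comm]
  | add u v hu hv => simp only [map_add, inner_add_right, hp.2.1, hu, hv]

lemma lid_comp_rTensor_comp_eq_id_of_adjoint (hp : IsTensorPairing p)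
    (hm : AdjointWRT p (innerP B) m mS) (hi : AdjointWRT (innerP ℂ) (innerP B) i iS)
    (hunit : m ∘ₗ rTensor B i = (TensorProduct.lid ℂ B).toLinearMap) :
    (TensorProduct.lid ℂ B).toLinearMap ∘ₗ rTensor B iS ∘ₗ mS = LinearMap.id := by
  refine LinearMap.ext fun x => ext_inner_left ℂ fun y => ?_
  have hy : m (i 1 ⊗ₜ y) = y := by simpa using LinearMap.congr_fun hunit (1 ⊗ₜ y)
  simpa [innerP, hy] using (inner_lid_rTensor_eq_of_adjoint hp hi y (mS x)).trans
    (hm (i 1 ⊗ₜ y) x).symm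

lemma rid_comp_lTensor_comp_eq_id_of_adjoint (hp : IsTensorPairing p)
    (hm : AdjointWRT p (innerP B) m mS) (hi : AdjointWRT (innerP ℂ) (innerP B) i iS)
    (hunit : m ∘ₗ lTensor B i = (TensorProduct.rid ℂ B).toLinearMap) :
    (TensorProduct.rid ℂ B).toLinearMap ∘ₗ lTensor B iS ∘ₗ mS = LinearMap.id := by
  refine LinearMap.ext fun x => ext_inner_left ℂ fun y => ?_
  have hy : m (y ⊗ₜ i 1) = y := by simpa using LinearMap.congr_fun hunit (y ⊗ₜ 1)
  simpa [innerP, hy] using (inner_rid_lTensor_eq_of_adjoint hp hi y (mS x)).trans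
    (hm (y ⊗ₜ i 1) x).symm

end Counit

section Coaction

variable {R H B : Type*} [CommRing R] [AddCommGroup H] [Module R H] [AddCommGroup B] [Module R B]
  {m : B ⊗[R] B →ₗ[R] B} {δ : B →ₗ[R] B ⊗[R] B} {ε : B →ₗ[R] R}

/-- `h ⊗ b ↦ ∑ ψ (q₁ ⊗ b) • q₀` where `Q h = ∑ q₀ ⊗ q₁`; for `ψ = i* ∘ m` this is the formula
for `Q2*` in the definition of a quantum bi-element. -/
def coactionTranspose (ψ : B ⊗[R] B →ₗ[R] R) (Q : H →ₗ[R] H ⊗[R] B) : H ⊗[R] B →ₗ[R] H :=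
  ((TensorProduct.rid R H).toLinearMap ∘ₗ lTensor H ψ ∘ₗ
    (TensorProduct.assoc R H B B).toLinearMap) ∘ₗ rTensor B Q

variable {ψ : B ⊗[R] B →ₗ[R] R} {Q : H →ₗ[R] H ⊗[R] B}

lemma coactionTranspose_comp_self
    (hcoassoc : rTensor B Q ∘ₗ Q =
      (TensorProduct.assoc R H B B).symm.toLinearMap ∘ₗ lTensor H δ ∘ₗ Q)
    (hcounit : (TensorProduct.rid R H).toLinearMap ∘ₗ lTensor H ε ∘ₗ Q = LinearMap.id)
    (hψ : ψ ∘ₗ δ = ε) :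
    coactionTranspose ψ Q ∘ₗ Q = LinearMap.id := by
  rw [coactionTranspose, comp_assoc, comp_assoc, comp_assoc, hcoassoc, ← hcounit, ← hψ,
    lTensor_comp]
  exact LinearMap.ext fun x => by simp

lemma rTensor_coactionTranspose_comp_lTensor
    (hmul : (TensorProduct.lid R B).toLinearMap ∘ₗ rTensor B ψ ∘ₗ
      (TensorProduct.assoc R B B B).symm.toLinearMap ∘ₗ lTensor B δ = m) :
    rTensor B (coactionTranspose ψ Q) ∘ₗ
        (TensorProduct.assoc R H B B).symm.toLinearMap ∘ₗ lTensor H δ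
      = lTensor H m ∘ₗ (TensorProduct.assoc R H B B).toLinearMap ∘ₗ rTensor B Q := by
  rw [← hmul, ← comp_assoc (rTensor B Q), ← rTensor_contract_comp_assoc_symm_comp_lTensor,
    coactionTranspose, rTensor_comp]
  simp only [comp_assoc]
  rw [← comp_assoc (lTensor H δ), rTensor_rTensor_comp_assoc_symm, comp_assoc,
    rTensor_comp_lTensor, ← lTensor_comp_rTensor]

lemma self_comp_coactionTranspose
    (hcoassoc : rTensor B Q ∘ₗ Q =
      (TensorProduct.assoc R H B B).symm.toLinearMap ∘ₗ lTensor H δ ∘ₗ Q)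
    (hmul : (TensorProduct.rid R B).toLinearMap ∘ₗ lTensor B ψ ∘ₗ
      (TensorProduct.assoc R B B B).toLinearMap ∘ₗ rTensor B δ = m) :
    Q ∘ₗ coactionTranspose ψ Q
      = lTensor H m ∘ₗ (TensorProduct.assoc R H B B).toLinearMap ∘ₗ rTensor B Q := by
  rw [← hmul, ← comp_assoc (rTensor B Q),
    ← contract_comp_assoc_comp_rTensor_assoc_symm_comp_lTensor, coactionTranspose,
    ← comp_assoc _ (lTensor H ψ), ← comp_assoc (rTensor B Q), ← comp_assoc _ (_ ∘ₗ lTensor H ψ),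
    comp_rid_comp_lTensor]
  simp only [comp_assoc]
  rw [← comp_assoc (rTensor B Q), ← assoc_comp_rTensor_rTensor, comp_assoc, ← rTensor_comp,
    hcoassoc]
  simp only [rTensor_comp, comp_assoc]

end Coaction

theorem stmt5_general
    (A B H : Type*)
    [NormedAddCommGroup A] [InnerProductSpace ℂ A]
    [NormedAddCommGroup B] [InnerProductSpace ℂ B]
    [NormedAddCommGroup H] [InnerProductSpace ℂ H]
    (pBB : B ⊗[ℂ] B → B ⊗[ℂ] B → ℂ) (hpBB : IsTensorPairing pBB)
    (mA : A ⊗[ℂ] A →ₗ[ℂ] A)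
    (mAS : A →ₗ[ℂ] A ⊗[ℂ] A) (iAS : A →ₗ[ℂ] ℂ)
    (mB : B ⊗[ℂ] B →ₗ[ℂ] B) (iB : ℂ →ₗ[ℂ] B)
    (mBS : B →ₗ[ℂ] B ⊗[ℂ] B) (iBS : B →ₗ[ℂ] ℂ)
    (hmBS : AdjointWRT pBB (innerP B) mB mBS)
    (hiBS : AdjointWRT (innerP ℂ) (innerP B) iB iBS)
    (hQB : QSystemEqs B mB iB mBS)
    (Q1 : H →ₗ[ℂ] A ⊗[ℂ] H) (Q1S : A ⊗[ℂ] H →ₗ[ℂ] H)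
    (Q2 : H →ₗ[ℂ] H ⊗[ℂ] B) (Q2S : H ⊗[ℂ] B →ₗ[ℂ] H)
    (hQBE : QBEEqs A B H mA iAS mAS mB iBS mBS Q1 Q2 Q1S Q2S)
    :
    rTensor H mAS ∘ₗ (Q1 ∘ₗ Q2S) =
        (TensorProduct.assoc ℂ A A H).symm.toLinearMap ∘ₗ
          lTensor A (Q1 ∘ₗ Q2S) ∘ₗ
          (TensorProduct.assoc ℂ A H B).toLinearMap ∘ₗ
          rTensor B (Q1 ∘ₗ Q2S) ∘ₗ
          (TensorProduct.assoc ℂ H B B).symm.toLinearMap ∘ₗ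
          lTensor H mBS := by
  obtain ⟨-, hunitl, hunitr, hfrobl, hfrobr, hsep⟩ := hQB
  obtain ⟨hcoassoc₁, hcoassoc₂, hcommute, -, hcounit₂, -, hQ2S_formula⟩ := hQBE
  have hQ2S : Q2S = coactionTranspose (iBS ∘ₗ mB) Q2 := by
    rw [hQ2S_formula, coactionTranspose, lTensor_comp]
    simp only [comp_assoc]
  have hinv : Q2S ∘ₗ Q2 = LinearMap.id := hQ2S ▸
    coactionTranspose_comp_self hcoassoc₂ hcounit₂ (by rw [comp_assoc, hsep, comp_id])
  have hcomul : rTensor B Q2S ∘ₗ (TensorProduct.assoc ℂ H B B).symm.toLinearMap ∘ₗ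
      lTensor H mBS = Q2 ∘ₗ Q2S := by
    have hmul_left := lid_comp_rTensor_comp_lTensor_eq_of_frobenius hfrobl
      (lid_comp_rTensor_comp_eq_id_of_adjoint hpBB hmBS hiBS hunitl)
    have hmul_right := rid_comp_lTensor_comp_rTensor_eq_of_frobenius hfrobr
      (rid_comp_lTensor_comp_eq_id_of_adjoint hpBB hmBS hiBS hunitr)
    rw [hQ2S, rTensor_coactionTranspose_comp_lTensor hmul_left,
      self_comp_coactionTranspose hcoassoc₂ hmul_right]
  refine LinearMap.ext fun x => ?_
  have hcomul_x := LinearMap.congr_fun hcomul x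
  have hcommute_x := LinearMap.congr_fun hcommute (Q2S x)
  have hinv_x := LinearMap.congr_fun (congrArg (lTensor A) hinv) (Q1 (Q2S x))
  have hcoassoc_x := LinearMap.congr_fun hcoassoc₁ (Q2S x)
  simp only [comp_apply, LinearEquiv.coe_coe, lTensor_comp, rTensor_comp, lTensor_id, id_coe,
    id_eq] at hcomul_x hcommute_x hinv_x hcoassoc_x ⊢
  rw [hcomul_x, ← hcommute_x, hinv_x, hcoassoc_x, LinearEquiv.symm_apply_apply]

/-- For a quantum bi-element `(H, Q1, Q2)` of a pair of
Q-systems in Hilb, the map `P := Q1∘Q2* : H ⊗ B → A ⊗ H` satisfies the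
comultiplicativity axiom of a quantum function from `B` to `A`:
`(mA* ⊗ 1_H)∘P = (1_A ⊗ P)∘(P ⊗ 1_B)∘(1_H ⊗ mB*)` as linear maps
`H ⊗ B → (A ⊗ A) ⊗ H` (canonical associators written explicitly). -/
theorem stmt5
    (A B H : Type*)
    [NormedAddCommGroup A] [InnerProductSpace ℂ A] [FiniteDimensional ℂ A]
    [NormedAddCommGroup B] [InnerProductSpace ℂ B] [FiniteDimensional ℂ B]
    [NormedAddCommGroup H] [InnerProductSpace ℂ H] [FiniteDimensional ℂ H]
    (pAA : A ⊗[ℂ] A → A ⊗[ℂ] A → ℂ) (hpAA : IsTensorPairing pAA)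
    (pBB : B ⊗[ℂ] B → B ⊗[ℂ] B → ℂ) (hpBB : IsTensorPairing pBB)
    (pAH : A ⊗[ℂ] H → A ⊗[ℂ] H → ℂ) (hpAH : IsTensorPairing pAH)
    (pHB : H ⊗[ℂ] B → H ⊗[ℂ] B → ℂ) (hpHB : IsTensorPairing pHB)
    (mA : A ⊗[ℂ] A →ₗ[ℂ] A) (iA : ℂ →ₗ[ℂ] A)
    (mAS : A →ₗ[ℂ] A ⊗[ℂ] A) (iAS : A →ₗ[ℂ] ℂ)
    (hmAS : AdjointWRT pAA (innerP A) mA mAS)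
    (hiAS : AdjointWRT (innerP ℂ) (innerP A) iA iAS)
    (hQA : QSystemEqs A mA iA mAS)
    (mB : B ⊗[ℂ] B →ₗ[ℂ] B) (iB : ℂ →ₗ[ℂ] B)
    (mBS : B →ₗ[ℂ] B ⊗[ℂ] B) (iBS : B →ₗ[ℂ] ℂ)
    (hmBS : AdjointWRT pBB (innerP B) mB mBS)
    (hiBS : AdjointWRT (innerP ℂ) (innerP B) iB iBS)
    (hQB : QSystemEqs B mB iB mBS)
    (Q1 : H →ₗ[ℂ] A ⊗[ℂ] H) (Q1S : A ⊗[ℂ] H →ₗ[ℂ] H)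
    (hQ1S : AdjointWRT (innerP H) pAH Q1 Q1S)
    (Q2 : H →ₗ[ℂ] H ⊗[ℂ] B) (Q2S : H ⊗[ℂ] B →ₗ[ℂ] H)
    (hQ2S : AdjointWRT (innerP H) pHB Q2 Q2S)
    (hQBE : QBEEqs A B H mA iAS mAS mB iBS mBS Q1 Q2 Q1S Q2S)
    :
    rTensor H mAS ∘ₗ (Q1 ∘ₗ Q2S) =
        (TensorProduct.assoc ℂ A A H).symm.toLinearMap ∘ₗ
          lTensor A (Q1 ∘ₗ Q2S) ∘ₗ
          (TensorProduct.assoc ℂ A H B).toLinearMap ∘ₗ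
          rTensor B (Q1 ∘ₗ Q2S) ∘ₗ
          (TensorProduct.assoc ℂ H B B).symm.toLinearMap ∘ₗ
          lTensor H mBS :=
  stmt5_general A B H pBB hpBB mA mAS iAS mB iB mBS iBS hmBS hiBS hQB Q1 Q1S Q2 Q2S hQBE
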